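/- arXiv:0711.2503 — 2 statements merged into one kernel-verified Lean document; each statement's English description precedes it below -/
import Mathlib

section
/- For all natural numbers m ≥ 1 and 0 ≤ s ≤ m, the associated Stirling number of the first kind satisfies d₂(m+1, s) ≤ (2m)^{m−s}. -/
open MeasureTheory Complex Matrix

noncomputable section

/-- The time-frequency shift `π(λ) = M_ℓ T_k` applied to a window `g ∈ ℂ^n`:
`(π(k,ℓ)g)_q = e^{2πiℓq/n} g_{(k+q) mod n}`. -/
def tfShift (n : ℕ) (lam : Fin n × Fin n) (g : Fin n → ℂ) : Fin n → ℂ :=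
  fun q => Complex.exp (2 * Real.pi * Complex.I * (lam.2 : ℕ) * (q : ℕ) / n) * g (lam.1 + q)

/-- The time-frequency shift `π(λ) = M_ℓ T_k` as an `n × n` matrix. -/
def tfMatrix (n : ℕ) (lam : Fin n × Fin n) : Matrix (Fin n) (Fin n) ℂ :=
  Matrix.of fun q p =>
    if p = lam.1 + q then Complex.exp (2 * Real.pi * Complex.I * (lam.2 : ℕ) * (q : ℕ) / n) else 0

/-- The Gabor synthesis matrix `Ψ_g ∈ ℂ^{n × n²}`, columns `π(λ)g`. -/
def gaborMatrix (n : ℕ) (g : Fin n → ℂ) : Matrix (Fin n) (Fin n × Fin n) ℂ :=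
  Matrix.of fun q lam => tfShift n lam g q

/-- The column submatrix of a matrix, columns restricted to a finite index set `Λ`. -/
def colSub {ι κ : Type*} (A : Matrix ι κ ℂ) (Λ : Finset κ) : Matrix ι ↥Λ ℂ :=
  Matrix.of fun i j => A i (j : κ)

/-- The column submatrix `Ψ_Λ` of the Gabor synthesis matrix. -/
def gaborSub (n : ℕ) (g : Fin n → ℂ) (Λ : Finset (Fin n × Fin n)) : Matrix (Fin n) ↥Λ ℂ :=
  colSub (gaborMatrix n g) Λ

/-- The ℓ¹ norm of a vector in `ℂ^ι`. -/
def l1norm {ι : Type*} [Fintype ι] (z : ι → ℂ) : ℝ := ∑ i, ‖z i‖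

/-- The ℓ² (Euclidean) norm of a vector in `ℂ^ι`. -/
def l2norm {ι : Type*} [Fintype ι] (z : ι → ℂ) : ℝ := Real.sqrt (∑ i, ‖z i‖ ^ 2)

/-- The standard Hermitian inner product `⟨u,v⟩ = ∑ u_i conj(v_i)` on `ℂ^ι`. -/
def dotc {ι : Type*} [Fintype ι] (u v : ι → ℂ) : ℂ := ∑ i, u i * (starRingEnd ℂ) (v i)

/-- `x` is the unique minimizer of the ℓ¹ norm among all `z` with `A z = A x`
(Basis Pursuit recovers `x` from `y = A x`). -/
def BPrecovers {ι κ : Type*} [Fintype ι] [Fintype κ] (A : Matrix ι κ ℂ) (x : κ → ℂ) : Prop :=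
  ∀ z : κ → ℂ, A.mulVec z = A.mulVec x → z ≠ x → l1norm x < l1norm z

/-- The spectral norm (`ℓ² → ℓ²` operator norm) of a complex matrix. -/
def specNorm {ι κ : Type*} [Fintype ι] [Fintype κ] [DecidableEq κ] (A : Matrix ι κ ℂ) : ℝ :=
  ‖LinearMap.toContinuousLinearMap (Matrix.toEuclideanLin A)‖

/-- The Frobenius norm of a complex matrix. -/
def frobNorm {ι κ : Type*} [Fintype ι] [Fintype κ] (A : Matrix ι κ ℂ) : ℝ :=
  Real.sqrt (∑ i, ∑ j, ‖A i j‖ ^ 2)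

/-- The complex sign: `sgn(z) = z/|z|` for `z ≠ 0`, and `sgn(0) = 0`. -/
def csgn (z : ℂ) : ℂ := if z = 0 then 0 else z / (‖z‖ : ℂ)

/-- The associated Stirling number of the first kind `d₂(m,s)`: the number of permutations
of an `m`-element set consisting of exactly `s` disjoint cycles, each of length at least 2
(equivalently, fixed-point-free permutations of `Fin m` with exactly `s` cycles). -/
def d2 (m s : ℕ) : ℕ :=
  Fintype.card {σ : Equiv.Perm (Fin m) // σ.cycleType.card = s ∧ σ.cycleType.sum = m}

instance : MeasurableSpace Circle := borel Circle
instance : BorelSpace Circle := ⟨rfl⟩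

/-- The normalized Haar (uniform) probability measure on the circle group
`{z ∈ ℂ : |z| = 1}`. -/
def circleHaar : Measure Circle :=
  Measure.haarMeasure (⊤ : TopologicalSpace.PositiveCompacts Circle)

instance : IsProbabilityMeasure circleHaar :=
  ⟨by unfold circleHaar; simpa using Measure.haarMeasure_self (K₀ := (⊤ : TopologicalSpace.PositiveCompacts Circle))⟩

/-- The random unimodular window `g^R_q = ε_q/√n` determined by the phases `ε : Fin n → Circle`. -/
def windowR (n : ℕ) (ε : Fin n → Circle) : Fin n → ℂ :=
  fun q => (ε q : ℂ) / Real.sqrt n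

/-- The distribution of `n` independent Haar-uniform points on the circle
(the law of the random phases `ε_0, …, ε_{n-1}`). -/
def Pmeas (n : ℕ) : Measure (Fin n → Circle) := Measure.pi fun _ => circleHaar

/-- The extension-by-zero matrix `E_Λ : ℂ^Λ → ℂ^κ`. -/
def extMat {κ : Type*} [DecidableEq κ] (Λ : Finset κ) : Matrix κ ↥Λ ℂ :=
  Matrix.of fun j lam => if j = (lam : κ) then 1 else 0

/-- Pad a matrix with columns indexed by `Λ` to one with columns indexed by all of `κ`,
filling with zero columns: the matrix `K R_Λ` where `R_Λ` is the restriction operator. -/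
def padCols {ι κ : Type*} [DecidableEq κ] {Λ : Finset κ} (K : Matrix ι ↥Λ ℂ) : Matrix ι κ ℂ :=
  Matrix.of fun i j => if h : j ∈ Λ then K i ⟨j, h⟩ else 0

end

/-!
Fix a point `a` of an `(n + 1)`-element set. Multiplying a fixed-point-free permutation `σ` on the
left by the transposition `(a σa)` cuts `a` out of its cycle: the result is fixed-point-free on
the remaining `n` points with the same number of cycles, or, when that cycle was `(a σa)` itself,
on the remaining `n - 1` points with one cycle fewer. For each value of `σa` this map is
injective, whence `d₂(n + 1, s) ≤ n (d₂(n, s) + d₂(n - 1, s - 1))`, and induction on `n - s`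
gives the bound because `2n (2(n - 1))^(n - 1 - s) ≤ (2n)^(n - s)`.
-/

open Equiv Equiv.Perm Finset

section DerangementsOn

variable {α : Type*} [Fintype α] [DecidableEq α]

theorem disjoint_mul_inv_cycleOf {σ : Perm α} {a : α} (ha : σ a ≠ a) :
    (σ * (σ.cycleOf a)⁻¹).Disjoint (σ.cycleOf a) :=
  disjoint_mul_inv_of_mem_cycleFactorsFinset
    (cycleOf_mem_cycleFactorsFinset_iff.2 (mem_support.2 ha))

theorem swap_mul_eq_swap_mul_cycleOf_mul {σ : Perm α} {a : α} (ha : σ a ≠ a) :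
    swap a (σ a) * σ = (swap a (σ a) * σ.cycleOf a) * (σ * (σ.cycleOf a)⁻¹) := by
  rw [mul_assoc, ← (disjoint_mul_inv_cycleOf ha).commute.eq, inv_mul_cancel_right]

theorem card_cycleType_swap_mul {σ : Perm α} {a : α} (ha : σ a ≠ a) :
    Multiset.card (swap a (σ a) * σ).cycleType + 1 =
      Multiset.card σ.cycleType + Multiset.card (swap a (σ a) * σ.cycleOf a).cycleType := by
  set c := σ.cycleOf a
  have hc : (σ * c⁻¹).Disjoint c := disjoint_mul_inv_cycleOf ha
  have hsc : (swap a (σ a) * c).Disjoint (σ * c⁻¹) := by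
    refine hc.symm.mono (fun x hx => ?_) le_rfl
    rw [← cycleOf_apply_self σ a] at hx
    exact (mem_support_swap_mul_imp_mem_support_ne hx).1
  have hσ : Multiset.card σ.cycleType = Multiset.card (σ * c⁻¹).cycleType + 1 := by
    conv_lhs => rw [← inv_mul_cancel_right σ c, hc.cycleType_mul]
    rw [Multiset.card_add, (isCycle_cycleOf σ ha).cycleType, Multiset.card_singleton]
  rw [swap_mul_eq_swap_mul_cycleOf_mul ha, hsc.cycleType_mul, Multiset.card_add, hσ]
  ring

theorem card_cycleType_swap_mul_of_apply_apply_eq {σ : Perm α} {a : α} (ha : σ a ≠ a)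
    (h : σ (σ a) = a) :
    Multiset.card (swap a (σ a) * σ).cycleType + 1 = Multiset.card σ.cycleType := by
  have hc : σ.cycleOf a = swap a (σ a) := by
    have := (isCycle_cycleOf σ ha).eq_swap_of_apply_apply_eq_self (x := a)
    simp only [cycleOf_apply_self, cycleOf_apply_apply_self] at this
    exact this ha h
  rw [card_cycleType_swap_mul ha, hc, Equiv.swap_mul_self, cycleType_one, Multiset.card_zero,
    add_zero]

theorem card_cycleType_swap_mul_of_apply_apply_ne {σ : Perm α} {a : α} (h : σ (σ a) ≠ a) :
    Multiset.card (swap a (σ a) * σ).cycleType = Multiset.card σ.cycleType := by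
  have ha : σ a ≠ a := fun ha => h (by rw [ha, ha])
  have hc := (isCycle_cycleOf σ ha).swap_mul (x := a)
  simp only [cycleOf_apply_self, cycleOf_apply_apply_self] at hc
  have := card_cycleType_swap_mul ha
  rw [(hc ha h).cycleType, Multiset.card_singleton] at this
  omega

theorem support_swap_mul_of_apply_apply_eq {σ : Perm α} {a : α} (h : σ (σ a) = a) :
    (swap a (σ a) * σ).support = (σ.support.erase a).erase (σ a) := by
  ext x
  simp only [mem_support, mem_erase, mul_apply, swap_apply_def]
  grind

/-- Counted by `d₂(#S, s)`. -/
def derangementsOn (S : Finset α) (s : ℕ) : Finset (Perm α) :=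
  univ.filter fun σ => σ.support = S ∧ Multiset.card σ.cycleType = s

theorem mem_derangementsOn {S : Finset α} {s : ℕ} {σ : Perm α} :
    σ ∈ derangementsOn S s ↔ σ.support = S ∧ Multiset.card σ.cycleType = s := by
  simp [derangementsOn]

theorem card_derangementsOn_zero_le_one (S : Finset α) : #(derangementsOn S 0) ≤ 1 :=
  card_le_one_iff_subset_singleton.2
    ⟨1, fun _ hσ => mem_singleton.2 (card_cycleType_eq_zero.1 (mem_derangementsOn.1 hσ).2)⟩

theorem derangementsOn_eq_empty_of_card_lt {S : Finset α} {s : ℕ} (h : #S < 2 * s) :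
    derangementsOn S s = ∅ := by
  refine eq_empty_of_forall_notMem fun σ hσ => h.not_ge ?_
  obtain ⟨rfl, rfl⟩ := mem_derangementsOn.1 hσ
  rw [← sum_cycleType, mul_comm, ← smul_eq_mul]
  exact Multiset.card_nsmul_le_sum fun _ => two_le_of_mem_cycleType

theorem swap_mul_mem_derangementsOn {S : Finset α} {s : ℕ} {σ : Perm α} {a : α}
    (hσ : σ ∈ derangementsOn S s) (ha : a ∈ S) :
    swap a (σ a) * σ ∈
      derangementsOn (S.erase a) s ∪ derangementsOn ((S.erase a).erase (σ a)) (s - 1) := by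
  obtain ⟨rfl, rfl⟩ := mem_derangementsOn.1 hσ
  rw [mem_union, mem_derangementsOn, mem_derangementsOn]
  by_cases h : σ (σ a) = a
  · have := card_cycleType_swap_mul_of_apply_apply_eq (mem_support.1 ha) h
    exact Or.inr ⟨support_swap_mul_of_apply_apply_eq h, by omega⟩
  · exact Or.inl ⟨by rw [support_swap_mul_eq σ a h, sdiff_singleton_eq_erase],
      card_cycleType_swap_mul_of_apply_apply_ne h⟩

theorem card_derangementsOn_le_sum {S : Finset α} {a : α} (ha : a ∈ S) (s : ℕ) :
    #(derangementsOn S s) ≤ ∑ b ∈ S.erase a,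
      (#(derangementsOn (S.erase a) s) + #(derangementsOn ((S.erase a).erase b) (s - 1))) := by
  have hmaps : Set.MapsTo (fun σ : Perm α => σ a) (derangementsOn S s) (S.erase a) := by
    intro σ hσ
    obtain ⟨rfl, -⟩ := mem_derangementsOn.1 hσ
    exact mem_erase.2 ⟨mem_support.1 ha, apply_mem_support.2 ha⟩
  rw [card_eq_sum_card_fiberwise hmaps]
  refine sum_le_sum fun b _ => (card_le_card_of_injOn (swap a b * ·) ?_ ?_).trans
    (card_union_le _ _)
  · intro σ hσ
    obtain ⟨hσS, rfl⟩ := mem_filter.1 (mem_coe.1 hσ)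
    exact swap_mul_mem_derangementsOn hσS ha
  · exact fun σ₁ _ σ₂ _ h => mul_left_cancel h

theorem card_derangementsOn_le_one {S : Finset α} {s : ℕ} (hS : #S = s + 1) :
    #(derangementsOn S s) ≤ 1 := by
  obtain ⟨a, ha⟩ : S.Nonempty := card_pos.1 (by omega)
  have hSa : #(S.erase a) = s := by rw [card_erase_of_mem ha, hS]; rfl
  rcases s with _ | _ | s
  · exact card_derangementsOn_zero_le_one S
  · calc #(derangementsOn S 1)
        ≤ ∑ b ∈ S.erase a, (#(derangementsOn (S.erase a) 1) +
            #(derangementsOn ((S.erase a).erase b) 0)) := card_derangementsOn_le_sum ha 1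
      _ ≤ ∑ b ∈ S.erase a, (0 + 1) := by
        refine sum_le_sum fun b _ => add_le_add ?_ (card_derangementsOn_zero_le_one _)
        rw [derangementsOn_eq_empty_of_card_lt (by omega), card_empty]
      _ = 1 := by simp [hSa]
  · rw [derangementsOn_eq_empty_of_card_lt (by omega), card_empty]
    exact Nat.zero_le _

theorem card_derangementsOn_le {S : Finset α} {s k : ℕ} (hS : #S = s + k + 1) :
    #(derangementsOn S s) ≤ (2 * (s + k)) ^ k := by
  induction k generalizing s S with
  | zero => exact card_derangementsOn_le_one hS
  | succ k ih =>
    obtain ⟨a, ha⟩ : S.Nonempty := card_pos.1 (by omega)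
    have hSa : #(S.erase a) = s + k + 1 := by rw [card_erase_of_mem ha, hS]; rfl
    rcases s with _ | s
    · exact (card_derangementsOn_zero_le_one S).trans (Nat.one_le_pow _ _ (by omega))
    have hbound (b : α) (hb : b ∈ S.erase a) :
        #(derangementsOn (S.erase a) (s + 1)) + #(derangementsOn ((S.erase a).erase b) s) ≤
          2 * (2 * (s + 1 + k)) ^ k := by
      have h₁ := ih (S := S.erase a) (s := s + 1) hSa
      have h₂ := ih (S := (S.erase a).erase b) (s := s) (by rw [card_erase_of_mem hb, hSa]; omega)
      have : (2 * (s + k)) ^ k ≤ (2 * (s + 1 + k)) ^ k := Nat.pow_le_pow_left (by omega) k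
      omega
    calc #(derangementsOn S (s + 1))
        ≤ ∑ b ∈ S.erase a, (#(derangementsOn (S.erase a) (s + 1)) +
            #(derangementsOn ((S.erase a).erase b) s)) := card_derangementsOn_le_sum ha (s + 1)
      _ ≤ ∑ b ∈ S.erase a, 2 * (2 * (s + 1 + k)) ^ k := sum_le_sum hbound
      _ = 2 * (s + 1 + k + 1) * (2 * (s + 1 + k)) ^ k := by
        rw [sum_const, hSa, smul_eq_mul]; ring
      _ ≤ 2 * (s + 1 + k + 1) * (2 * (s + 1 + k + 1)) ^ k :=
        Nat.mul_le_mul_left _ (Nat.pow_le_pow_left (by omega) k)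
      _ = (2 * (s + 1 + (k + 1))) ^ (k + 1) := by ring

theorem d2_eq_card_derangementsOn (n s : ℕ) :
    d2 n s = #(derangementsOn (univ : Finset (Fin n)) s) := by
  rw [d2, Fintype.card_subtype, derangementsOn]
  congr 1
  ext σ
  simp only [mem_filter, mem_univ, true_and, sum_cycleType]
  rw [← card_eq_iff_eq_univ, Fintype.card_fin, and_comm]

end DerangementsOn

theorem d2_le_general (m s : ℕ) (hs : s ≤ m) :
    d2 (m + 1) s ≤ (2 * m) ^ (m - s) := by
  obtain ⟨k, rfl⟩ := Nat.exists_eq_add_of_le hs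
  rw [d2_eq_card_derangementsOn, Nat.add_sub_cancel_left]
  exact card_derangementsOn_le (by simp)

/-- For `m ≥ 1` and `0 ≤ s ≤ m`, the associated Stirling number of the first
kind satisfies `d₂(m+1, s) ≤ (2m)^{m−s}`. -/
theorem d2_le (m s : ℕ) (hm : 1 ≤ m) (hs : s ≤ m) :
    d2 (m + 1) s ≤ (2 * m) ^ (m - s) :=
  d2_le_general m s hs
end

section
/- Let A ∈ ℂ^{n×N} be a matrix with columns a_1,…,a_N, let Λ ⊆ {1,…,N}, and let A_Λ be the submatrix of columns indexed by Λ. Assume A_Λ* A_Λ is invertible. Let x ∈ ℂ^N be supported on Λ and set y = A x. If for every ρ ∉ Λ one has |⟨ (A_Λ* A_Λ)^{−1} A_Λ* a_ρ , R_Λ sgn(x) ⟩| < 1, where R_Λ restricts a vector to its entries in Λ, then x is the unique minimizer of ‖z‖₁ over all z ∈ ℂ^N with A z = y. -/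
open MeasureTheory Complex Matrix

/-! The proof exhibits a dual certificate: with `s = R_Λ sgn(x)`, the vector
`w = A* A_Λ (A_Λ* A_Λ)⁻¹ s` lies in the range of `A*`, equals `sgn(x)` on `Λ`, and its entry at
`ρ ∉ Λ` is the conjugate of `⟨A_Λ† a_ρ, s⟩`, so `|w_ρ| < 1` there. For a competitor `z` with
`A z = A x`, `‖x‖₁ = ⟨x, w⟩ = ⟨z, w⟩ ≤ Σ |z_j| |w_j| ≤ ‖z‖₁`, and the last inequality is strict
unless `z` is supported on `Λ`, where `A_Λ` is injective. -/

section Dotc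

variable {ι κ : Type*} [Fintype ι]

theorem dotc_mulVec [Fintype κ] (M : Matrix ι κ ℂ) (u : κ → ℂ) (v : ι → ℂ) :
    dotc (M *ᵥ u) v = dotc u (Mᴴ *ᵥ v) := by
  simp only [dotc, mulVec, dotProduct, conjTranspose_apply, map_sum, map_mul,
    RCLike.star_def, Complex.conj_conj, Finset.sum_mul, Finset.mul_sum]
  rw [Finset.sum_comm]
  exact Finset.sum_congr rfl fun _ _ => Finset.sum_congr rfl fun _ _ => by ring

theorem conj_dotc (u v : ι → ℂ) : starRingEnd ℂ (dotc u v) = dotc v u := by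
  simp only [dotc, map_sum, map_mul, Complex.conj_conj, mul_comm]

theorem conjTranspose_mulVec_apply (M : Matrix ι κ ℂ) (v : ι → ℂ) (j : κ) :
    (Mᴴ *ᵥ v) j = dotc v fun i => M i j := by
  simp only [dotc, mulVec, dotProduct, conjTranspose_apply, RCLike.star_def, mul_comm]

theorem re_dotc_le_sum_norm_mul (z w : ι → ℂ) : (dotc z w).re ≤ ∑ j, ‖z j‖ * ‖w j‖ :=
  calc (dotc z w).re ≤ ‖dotc z w‖ := Complex.re_le_norm _
    _ ≤ ∑ j, ‖z j * starRingEnd ℂ (w j)‖ := norm_sum_le _ _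
    _ = ∑ j, ‖z j‖ * ‖w j‖ := by simp only [norm_mul, Complex.norm_conj]

end Dotc

theorem norm_csgn_le_one (z : ℂ) : ‖csgn z‖ ≤ 1 := by
  unfold csgn
  split_ifs with h
  · simp
  · rw [norm_div, Complex.norm_real, norm_norm, div_self (norm_ne_zero_iff.mpr h)]

theorem mul_conj_csgn (z : ℂ) : z * starRingEnd ℂ (csgn z) = ‖z‖ := by
  unfold csgn
  split_ifs with h
  · simp [h]
  · have hz : ((‖z‖ : ℝ) : ℂ) ≠ 0 := by exact_mod_cast norm_ne_zero_iff.mpr h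
    rw [map_div₀, Complex.conj_ofReal, ← mul_div_assoc, Complex.mul_conj,
      Complex.normSq_eq_norm_sq, div_eq_iff hz]
    push_cast
    ring

theorem sum_norm_mul_lt_l1norm {κ : Type*} [Fintype κ] {z w : κ → ℂ}
    (hw : ∀ j, ‖w j‖ ≤ 1) {ρ : κ} (hzρ : z ρ ≠ 0) (hwρ : ‖w ρ‖ < 1) :
    ∑ j, ‖z j‖ * ‖w j‖ < l1norm z :=
  Finset.sum_lt_sum (fun j _ => mul_le_of_le_one_right (norm_nonneg _) (hw j))
    ⟨ρ, Finset.mem_univ ρ, mul_lt_of_lt_one_right (norm_pos_iff.mpr hzρ) hwρ⟩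

section SupportedOn

variable {ι κ : Type*} {A : Matrix ι κ ℂ} {Λ : Finset κ}

theorem conjTranspose_colSub_mulVec [Fintype ι] (v : ι → ℂ) (j : Λ) :
    ((colSub A Λ)ᴴ *ᵥ v) j = (Aᴴ *ᵥ v) j := rfl

theorem mulVec_eq_colSub_mulVec [Fintype κ] {u : κ → ℂ} (hu : ∀ j, u j ≠ 0 → j ∈ Λ) :
    A *ᵥ u = colSub A Λ *ᵥ fun j : Λ => u j := by
  funext i
  simp only [mulVec, dotProduct, colSub, of_apply]
  rw [Finset.sum_coe_sort Λ fun j => A i j * u j]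
  refine (Finset.sum_subset (Finset.subset_univ Λ) fun j _ hj => ?_).symm
  rw [not_imp_comm.mp (hu j) hj, mul_zero]

theorem eq_of_mulVec_eq_of_colSub_injective [Fintype κ]
    (hinj : Function.Injective (colSub A Λ).mulVec) {x z : κ → ℂ}
    (hx : ∀ j, x j ≠ 0 → j ∈ Λ) (hz : ∀ j, z j ≠ 0 → j ∈ Λ)
    (hAz : A *ᵥ z = A *ᵥ x) : z = x := by
  have hΛ : (fun j : Λ => z j) = fun j : Λ => x j :=
    hinj (by rw [← mulVec_eq_colSub_mulVec hx, ← mulVec_eq_colSub_mulVec hz, hAz])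
  funext j
  by_cases hj : j ∈ Λ
  · exact congrFun hΛ ⟨j, hj⟩
  · rw [not_imp_comm.mp (hz j) hj, not_imp_comm.mp (hx j) hj]

theorem bpRecovers_of_dual_certificate [Fintype ι] [Fintype κ]
    (hinj : Function.Injective (colSub A Λ).mulVec) {x : κ → ℂ}
    (hx : ∀ j, x j ≠ 0 → j ∈ Λ) (v : ι → ℂ)
    (hon : ∀ j ∈ Λ, (Aᴴ *ᵥ v) j = csgn (x j)) (hoff : ∀ j ∉ Λ, ‖(Aᴴ *ᵥ v) j‖ < 1) :
    BPrecovers A x := by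
  intro z hAz hne
  set w := Aᴴ *ᵥ v
  have hw : ∀ j, ‖w j‖ ≤ 1 := fun j => by
    by_cases hj : j ∈ Λ
    · exact hon j hj ▸ norm_csgn_le_one _
    · exact (hoff j hj).le
  have hxw : dotc x w = l1norm x := by
    rw [dotc, l1norm, Complex.ofReal_sum]
    refine Finset.sum_congr rfl fun j _ => ?_
    by_cases hj : j ∈ Λ
    · rw [hon j hj, mul_conj_csgn]
    · simp [not_imp_comm.mp (hx j) hj]
  have hzw : dotc z w = dotc x w := by
    simp only [w, ← dotc_mulVec, hAz]
  obtain ⟨ρ, hzρ, hρ⟩ : ∃ ρ, z ρ ≠ 0 ∧ ρ ∉ Λ := by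
    by_contra! hz
    exact hne (eq_of_mulVec_eq_of_colSub_injective hinj hx hz hAz)
  calc l1norm x = (dotc z w).re := by rw [hzw, hxw, Complex.ofReal_re]
    _ ≤ ∑ j, ‖z j‖ * ‖w j‖ := re_dotc_le_sum_norm_mul z w
    _ < l1norm z := sum_norm_mul_lt_l1norm hw hzρ (hoff ρ hρ)

end SupportedOn

section Gram

variable {ι ι' : Type*} [Fintype ι] [Fintype ι'] [DecidableEq ι'] {B : Matrix ι ι' ℂ}

theorem mulVec_injective_of_isUnit_det_gram (h : IsUnit (Bᴴ * B).det) :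
    Function.Injective B.mulVec :=
  Function.LeftInverse.injective (g := ((Bᴴ * B)⁻¹ * Bᴴ).mulVec) fun u => by
    rw [mulVec_mulVec, Matrix.mul_assoc, nonsing_inv_mul _ h, one_mulVec]

theorem conjTranspose_mulVec_gram_certificate (h : IsUnit (Bᴴ * B).det) (s : ι' → ℂ) :
    Bᴴ *ᵥ (B *ᵥ ((Bᴴ * B)⁻¹ *ᵥ s)) = s := by
  rw [mulVec_mulVec, mulVec_mulVec, mul_nonsing_inv _ h, one_mulVec]

theorem dotc_gram_certificate (s : ι' → ℂ) (a : ι → ℂ) :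
    dotc (B *ᵥ ((Bᴴ * B)⁻¹ *ᵥ s)) a = starRingEnd ℂ (dotc (((Bᴴ * B)⁻¹ * Bᴴ) *ᵥ a) s) := by
  have hG : ((Bᴴ * B)⁻¹)ᴴ = (Bᴴ * B)⁻¹ := by
    rw [conjTranspose_nonsing_inv, conjTranspose_mul, conjTranspose_conjTranspose]
  rw [conj_dotc, dotc_mulVec, dotc_mulVec, mulVec_mulVec, hG]

end Gram

/-- (Fuchs/Tropp recovery condition.) If `x` is supported on `Λ`,
`A_Λ* A_Λ` is invertible, and `|⟨A_Λ† a_ρ, R_Λ sgn(x)⟩| < 1` for all `ρ ∉ Λ`, where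
`A_Λ† = (A_Λ* A_Λ)^{-1} A_Λ*`, then `x` is the unique ℓ¹ minimizer subject to `A z = A x`. -/
theorem fuchs_tropp_recovery (n N : ℕ) (A : Matrix (Fin n) (Fin N) ℂ) (Λ : Finset (Fin N))
    (x : Fin N → ℂ) (hsupp : ∀ j, x j ≠ 0 → j ∈ Λ)
    (hinv : IsUnit ((colSub A Λ)ᴴ * colSub A Λ).det)
    (hrec : ∀ ρ : Fin N, ρ ∉ Λ →
      ‖dotc
        ((((colSub A Λ)ᴴ * colSub A Λ)⁻¹ * (colSub A Λ)ᴴ).mulVec fun i => A i ρ)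
        (fun j : ↥Λ => csgn (x (j : Fin N)))‖ < 1) :
    BPrecovers A x := by
  set s : Λ → ℂ := fun j => csgn (x j)
  refine bpRecovers_of_dual_certificate (mulVec_injective_of_isUnit_det_gram hinv) hsupp
    (colSub A Λ *ᵥ (((colSub A Λ)ᴴ * colSub A Λ)⁻¹ *ᵥ s)) (fun j hj => ?_) (fun ρ hρ => ?_)
  · rw [← conjTranspose_colSub_mulVec _ ⟨j, hj⟩, conjTranspose_mulVec_gram_certificate hinv]
  · rw [conjTranspose_mulVec_apply, dotc_gram_certificate, Complex.norm_conj]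
    exact hrec ρ hρ
end
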